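/- Let R be a random variable on [0,1] with strictly increasing continuous CDF F and density p. The minimizer of Q(b) = ∫_a^b (b-r)(r-a) dF(r) + ∫_b^c (c-r)(r-b) dF(r) over b ∈ [a,c] is b* = F^{-1}( F(c) - ∫_a^c ((r-a)/(c-a)) dF(r) ). -/

import Mathlib

/-!
Differentiating under the moving endpoint, `Q'(b) = ∫_a^b (r-a) dF(r) - ∫_b^c (c-r) dF(r)`: the
boundary terms vanish because both integrands vanish at `r = b`. Since `(r-a) + (c-r) = c-a`, this
is `∫_a^c (r-a) dF(r) - (c-a)(F c - F b)`, which by the choice of `b*` equals `(c-a)(F b - F b*)`.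
As `F` is increasing, `Q` decreases on `[a, b*]` and increases on `[b*, c]`.
-/

open Set intervalIntegral

lemma hasDerivAt_integral_sub_mul {f : ℝ → ℝ} (hf : Continuous f) (a b : ℝ) :
    HasDerivAt (fun x => ∫ r in a..x, (x - r) * f r) (∫ r in a..b, f r) b := by
  have hg : Continuous fun r => r * f r := by fun_prop
  have hsplit : (fun x => ∫ r in a..x, (x - r) * f r)
      = fun x => x * (∫ r in a..x, f r) - ∫ r in a..x, r * f r := by
    funext x
    rw [← integral_const_mul, ← integral_sub ((hf.intervalIntegrable a x).const_mul x)
      (hg.intervalIntegrable a x)]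
    exact integral_congr fun r _ => by ring
  have hF := integral_hasDerivAt_right (hf.intervalIntegrable a b)
    (hf.stronglyMeasurableAtFilter _ _) hf.continuousAt
  have hG := integral_hasDerivAt_right (hg.intervalIntegrable a b)
    (hg.stronglyMeasurableAtFilter _ _) hg.continuousAt
  rw [hsplit]
  exact (((hasDerivAt_id' b).mul hF).sub hG).congr_deriv (by ring)

lemma hasDerivAt_quantization_variance {p : ℝ → ℝ} (hp : Continuous p) {a c : ℝ} {Q : ℝ → ℝ}
    (hQ : ∀ b, Q b = (∫ r in a..b, (b - r) * (r - a) * p r) +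
      ∫ r in b..c, (c - r) * (r - b) * p r) (b : ℝ) :
    HasDerivAt Q ((∫ r in a..b, (r - a) * p r) + ∫ r in c..b, (c - r) * p r) b := by
  have hQ' : Q = fun x => (∫ r in a..x, (x - r) * ((r - a) * p r)) +
      ∫ r in c..x, (x - r) * ((c - r) * p r) := by
    funext x
    rw [hQ, integral_symm c x, ← integral_neg]
    congr 1 <;> exact integral_congr fun r _ => by ring
  rw [hQ']
  exact (hasDerivAt_integral_sub_mul (by fun_prop) a b).add
    (hasDerivAt_integral_sub_mul (by fun_prop) c b)

lemma integral_sub_mul_add_integral_mul_sub {p : ℝ → ℝ} (hp : Continuous p) (a b c : ℝ) :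
    (∫ r in a..b, (r - a) * p r) + ∫ r in c..b, (c - r) * p r
      = (∫ r in a..c, (r - a) * p r) + (c - a) * ∫ r in c..b, p r := by
  have hw : Continuous fun r => (r - a) * p r := by fun_prop
  have hcomp : ∫ r in c..b, (c - r) * p r
      = (c - a) * (∫ r in c..b, p r) - ∫ r in c..b, (r - a) * p r := by
    rw [← integral_const_mul, ← integral_sub ((hp.intervalIntegrable c b).const_mul _)
      (hw.intervalIntegrable c b)]
    exact integral_congr fun r _ => by ring
  rw [hcomp, ← integral_add_adjacent_intervals (hw.intervalIntegrable a c)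
    (hw.intervalIntegrable c b)]
  ring

theorem stmt1_general (F p : ℝ → ℝ) (a c : ℝ) (ha : 0 ≤ a) (hac : a < c) (hc : c ≤ 1)
    (hF : ∀ x, HasDerivAt F (p x) x) (hpcont : Continuous p)
    (hmono : StrictMonoOn F (Set.Icc (0:ℝ) 1))
    (Q : ℝ → ℝ)
    (hQ : ∀ b, Q b = (∫ r in a..b, (b - r) * (r - a) * p r) +
      ∫ r in b..c, (c - r) * (r - b) * p r)
    (bstar : ℝ) (hbmem : bstar ∈ Set.Icc a c)
    (hbs : F bstar = F c - ∫ r in a..c, ((r - a) / (c - a)) * p r) :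
    IsMinOn Q (Set.Icc a c) bstar := by
  have hca : 0 < c - a := sub_pos.2 hac
  have hFTC (x y : ℝ) : ∫ r in x..y, p r = F y - F x :=
    integral_eq_sub_of_hasDerivAt (fun r _ => hF r) (hpcont.intervalIntegrable x y)
  have hmean : ∫ r in a..c, (r - a) * p r = (c - a) * (F c - F bstar) := by
    rw [hbs, sub_sub_cancel, ← integral_const_mul]
    exact integral_congr fun r _ => by field_simp
  have hQ' (b : ℝ) : HasDerivAt Q ((c - a) * (F b - F bstar)) b := by
    convert hasDerivAt_quantization_variance hpcont hQ b using 1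
    rw [integral_sub_mul_add_integral_mul_sub hpcont, hmean, hFTC]
    ring
  have hFmono : MonotoneOn F (Icc a c) := hmono.monotoneOn.mono (Icc_subset_Icc ha hc)
  have hdiff (s : Set ℝ) : DifferentiableOn ℝ Q s :=
    fun x _ => (hQ' x).differentiableAt.differentiableWithinAt
  refine isMinOn_Icc_of_deriv (hQ' a).continuousAt (hQ' bstar).continuousAt
    (hQ' c).continuousAt (hdiff _) (hdiff _) (fun x hx => ?_) (fun x hx => ?_)
  all_goals rw [(hQ' x).deriv]
  · exact mul_nonpos_of_nonneg_of_nonpos hca.le <| sub_nonpos.2 <|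
      hFmono ⟨hx.1.le, hx.2.le.trans hbmem.2⟩ hbmem hx.2.le
  · exact mul_nonneg hca.le <| sub_nonneg.2 <|
      hFmono hbmem ⟨hbmem.1.trans hx.1.le, hx.2.le⟩ hx.1.le

/-- Let R be a random variable on [0,1] with strictly increasing
continuous CDF F and (continuous, positive) density p.  The minimizer of
Q(b) = ∫_a^b (b-r)(r-a) dF(r) + ∫_b^c (c-r)(r-b) dF(r) over b ∈ [a,c] is
b* = F⁻¹( F(c) - ∫_a^c ((r-a)/(c-a)) dF(r) ),
i.e. the point b* ∈ [a,c] satisfying F(b*) = F(c) - ∫_a^c ((r-a)/(c-a)) p(r) dr. -/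
theorem stmt1 (F p : ℝ → ℝ) (a c : ℝ) (ha : 0 ≤ a) (hac : a < c) (hc : c ≤ 1)
    (hF : ∀ x, HasDerivAt F (p x) x) (hpcont : Continuous p)
    (hppos : ∀ x ∈ Set.Icc (0:ℝ) 1, 0 < p x)
    (hmono : StrictMonoOn F (Set.Icc (0:ℝ) 1))
    (Q : ℝ → ℝ)
    (hQ : ∀ b, Q b = (∫ r in a..b, (b - r) * (r - a) * p r) +
      ∫ r in b..c, (c - r) * (r - b) * p r)
    (bstar : ℝ) (hbmem : bstar ∈ Set.Icc a c)
    (hbs : F bstar = F c - ∫ r in a..c, ((r - a) / (c - a)) * p r) :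
    IsMinOn Q (Set.Icc a c) bstar :=
  stmt1_general F p a c ha hac hc hF hpcont hmono Q hQ bstar hbmem hbs
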